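/- Let 0 < μ ≤ L, let f be μ-strongly convex with L-Lipschitz gradient on ℝⁿ, with minimizer x⋆, and let 0 < s ≤ 1/L. Then the iterates of the implicit Euler scheme for the high-resolution NAG-SC ODE satisfy, for every k ≥ 0, f(x_k) − f(x⋆) ≤ ( (3 − 2√(μs) + μs)/(2 + 4√(μs) + 2μs) · sL + 2μ/L + (1 + √(μs))/2 ) · L‖x₀ − x⋆‖² / (1 + √(μs)/4)^k. -/

import Mathlib

/-!
With `q = √μ` and `r = √s`, the energy
`V(x, v) = f x - f x⋆ + ‖v‖²/4 + ‖v + 2q (x - x⋆) + r ∇f(x)‖²/4`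
is a Lyapunov function of the implicit scheme. Along one step the second auxiliary vector changes
by exactly `-r (1 + qr) ∇f(x_{k+1})`; strong convexity, used between consecutive iterates and
towards `x⋆`, then shows that `V` drops by a dissipation term that dominates `(qr/4) V` at the new
iterate. Hence `V` decays like `(1 + qr/4)^(-k)`, and `V(x₀, v₀)` is bounded via the descent lemma
and `‖∇f(x₀)‖ ≤ L ‖x₀ - x⋆‖`.
-/

open scoped RealInnerProductSpace

variable {E : Type*} [NormedAddCommGroup E] [InnerProductSpace ℝ E] {f : E → ℝ} {f' : E → E}

theorem IsLocalMin.hasGradientAt_eq_zero [CompleteSpace E] {a g : E}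
    (h : IsLocalMin f a) (hf : HasGradientAt f g a) : g = 0 := by
  simpa using congrArg (InnerProductSpace.toDual ℝ E).symm (h.hasFDerivAt_eq_zero hf.hasFDerivAt)

theorem norm_add_sq_le {F : Type*} [SeminormedAddGroup F] (a b : F) :
    ‖a + b‖ ^ 2 ≤ 2 * (‖a‖ ^ 2 + ‖b‖ ^ 2) :=
  (pow_le_pow_left₀ (norm_nonneg _) (norm_add_le a b) 2).trans add_sq_le

theorem norm_sq_sub_norm_sq_le (a b : E) : ‖a‖ ^ 2 - ‖b‖ ^ 2 ≤ 2 * ⟪a, a - b⟫ := by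
  have h := norm_sub_sq_real a (a - b)
  rw [sub_sub_cancel] at h
  linarith [sq_nonneg ‖a - b‖]

theorem mul_norm_sq_le_inner_sub {μ : ℝ}
    (hsc : ∀ z w, f w ≥ f z + ⟪f' z, w - z⟫ + μ / 2 * ‖w - z‖ ^ 2) (x y : E) :
    μ * ‖x - y‖ ^ 2 ≤ ⟪f' x - f' y, x - y⟫ := by
  have hxy := hsc x y
  have hyx := hsc y x
  rw [← neg_sub x y, inner_neg_right, norm_neg] at hxy
  rw [inner_sub_left]
  linarith

theorem sub_le_of_lipschitz_gradient [CompleteSpace E] {L : ℝ}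
    (hgrad : ∀ z, HasGradientAt f (f' z) z) (hLip : ∀ z w, ‖f' z - f' w‖ ≤ L * ‖z - w‖)
    {xstar : E} (hstar : f' xstar = 0) (x : E) :
    f x - f xstar ≤ L / 2 * ‖x - xstar‖ ^ 2 := by
  set d := x - xstar
  let φ : ℝ → ℝ := fun t ↦ f (xstar + t • d) - L * t ^ 2 / 2 * ‖d‖ ^ 2
  have hφ : ∀ t, HasDerivAt φ (⟪f' (xstar + t • d), d⟫ - L * t * ‖d‖ ^ 2) t := by
    intro t
    have hline : HasDerivAt (fun t : ℝ ↦ xstar + t • d) d t := by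
      simpa using ((hasDerivAt_id t).smul_const d).const_add xstar
    refine (((hgrad _).hasFDerivAt.comp_hasDerivAt t hline).sub
      ((((hasDerivAt_pow 2 t).const_mul L).div_const 2).mul_const (‖d‖ ^ 2))).congr_deriv ?_
    simp only [InnerProductSpace.toDual_apply_apply]
    ring
  have hanti : AntitoneOn φ (Set.Icc 0 1) := by
    refine antitoneOn_of_hasDerivWithinAt_nonpos (convex_Icc 0 1)
      (HasDerivAt.continuousOn fun t _ ↦ hφ t) (fun t _ ↦ (hφ t).hasDerivWithinAt) ?_
    intro t ht
    rw [interior_Icc] at ht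
    have hg : ‖f' (xstar + t • d)‖ ≤ L * (t * ‖d‖) := by
      simpa [hstar, norm_smul, abs_of_pos ht.1] using hLip (xstar + t • d) xstar
    calc ⟪f' (xstar + t • d), d⟫ - L * t * ‖d‖ ^ 2
        ≤ ‖f' (xstar + t • d)‖ * ‖d‖ - L * t * ‖d‖ ^ 2 := by gcongr; exact real_inner_le_norm _ _
      _ ≤ L * (t * ‖d‖) * ‖d‖ - L * t * ‖d‖ ^ 2 := by gcongr
      _ = 0 := by ring
  have h10 : φ 1 ≤ φ 0 := hanti (by simp) (by simp) zero_le_one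
  simp only [φ, d, one_smul, add_sub_cancel, one_pow, mul_one, zero_smul, add_zero,
    zero_pow two_ne_zero, mul_zero, zero_div, zero_mul, sub_zero] at h10
  linarith

section Scheme

variable {q r : ℝ} {xstar : E}

/-- The Lyapunov function of the scheme, written with `q = √μ` and `r = √s`. -/
noncomputable def nagEnergy (f : E → ℝ) (f' : E → E) (q r : ℝ) (xstar x v : E) : ℝ :=
  f x - f xstar + ‖v‖ ^ 2 / 4 + ‖v + (2 * q) • (x - xstar) + r • f' x‖ ^ 2 / 4

noncomputable def nagDissipation (f' : E → E) (q r : ℝ) (xstar x v : E) : ℝ :=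
  q * r * (r * ⟪f' x, v⟫ + (1 + q * r) * (‖v‖ ^ 2 + ⟪f' x, x - xstar⟫))
    + r ^ 2 * (1 + q * r) / 2 * ‖f' x‖ ^ 2

theorem sub_le_nagEnergy (x v : E) : f x - f xstar ≤ nagEnergy f f' q r xstar x v := by
  rw [nagEnergy, add_assoc]
  exact le_add_of_nonneg_right (by positivity)

theorem nagEnergy_sub_le (hsc : ∀ z w, f w ≥ f z + ⟪f' z, w - z⟫ + q ^ 2 / 2 * ‖w - z‖ ^ 2)
    {x₀ x₁ v₀ v₁ : E} (hx : x₁ - x₀ = r • v₁)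
    (hv : v₁ - v₀ = -((2 * (q * r)) • v₁) - r • (f' x₁ - f' x₀) - (r * (1 + q * r)) • f' x₁) :
    nagEnergy f f' q r xstar x₁ v₁ - nagEnergy f f' q r xstar x₀ v₀
      ≤ -nagDissipation f' q r xstar x₁ v₁ := by
  have hw : (v₁ + (2 * q) • (x₁ - xstar) + r • f' x₁) - (v₀ + (2 * q) • (x₀ - xstar) + r • f' x₀)
      = -((r * (1 + q * r)) • f' x₁) := by
    linear_combination (norm := module) hv + (2 * q) • hx
  have hdescent := hsc x₁ x₀
  have hmono := mul_norm_sq_le_inner_sub hsc x₁ x₀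
  have hv_sq := norm_sq_sub_norm_sq_le v₁ v₀
  have hw_sq := norm_sq_sub_norm_sq_le (v₁ + (2 * q) • (x₁ - xstar) + r • f' x₁)
    (v₀ + (2 * q) • (x₀ - xstar) + r • f' x₀)
  rw [← neg_sub x₁ x₀, hx, inner_neg_right, real_inner_smul_right, norm_neg, norm_smul,
    Real.norm_eq_abs, mul_pow, sq_abs] at hdescent
  rw [hx, real_inner_smul_right, inner_sub_left, norm_smul, Real.norm_eq_abs, mul_pow, sq_abs]
    at hmono
  rw [hv, inner_sub_right, inner_sub_right, inner_neg_right, real_inner_smul_right,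
    real_inner_smul_right, real_inner_smul_right, inner_sub_right, real_inner_self_eq_norm_sq,
    real_inner_comm (f' x₁), real_inner_comm (f' x₀)] at hv_sq
  rw [hw, inner_neg_right, real_inner_smul_right, inner_add_left, inner_add_left,
    real_inner_smul_left, real_inner_smul_left, real_inner_self_eq_norm_sq,
    real_inner_comm (f' x₁) v₁, real_inner_comm (f' x₁) (x₁ - xstar)] at hw_sq
  rw [nagEnergy, nagEnergy, nagDissipation]
  linarith

theorem mul_nagEnergy_le_nagDissipation (hq : 0 ≤ q) (hr : 0 ≤ r)
    (hsc : ∀ z w, f w ≥ f z + ⟪f' z, w - z⟫ + q ^ 2 / 2 * ‖w - z‖ ^ 2)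
    (hmin : ∀ z, f xstar ≤ f z) (x v : E) :
    q * r / 4 * nagEnergy f f' q r xstar x v ≤ nagDissipation f' q r xstar x v := by
  have hm : 0 ≤ q * r := mul_nonneg hq hr
  have hm2 : 0 ≤ (q * r) ^ 2 := sq_nonneg _
  have hgap : 0 ≤ f x - f xstar := sub_nonneg.2 (hmin x)
  have hinner : f x - f xstar + q ^ 2 / 2 * ‖x - xstar‖ ^ 2 ≤ ⟪f' x, x - xstar⟫ := by
    have h := hsc x xstar
    rw [← neg_sub x xstar, inner_neg_right, norm_neg] at h
    linarith
  -- Grouping `v` with `r • f' x` lets `‖v + r • f' x‖² ≥ 0` absorb the indefinite term `r ⟪f' x, v⟫`.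
  have hvg : ‖v + r • f' x‖ ^ 2 = ‖v‖ ^ 2 + 2 * r * ⟪f' x, v⟫ + r ^ 2 * ‖f' x‖ ^ 2 := by
    rw [norm_add_sq_real, real_inner_smul_right, norm_smul, Real.norm_eq_abs, mul_pow, sq_abs,
      real_inner_comm]
    ring
  have hw : ‖v + (2 * q) • (x - xstar) + r • f' x‖ ^ 2
      ≤ 2 * (‖v + r • f' x‖ ^ 2 + (2 * q) ^ 2 * ‖x - xstar‖ ^ 2) := by
    calc ‖v + (2 * q) • (x - xstar) + r • f' x‖ ^ 2
        = ‖(v + r • f' x) + (2 * q) • (x - xstar)‖ ^ 2 := by rw [add_right_comm]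
      _ ≤ 2 * (‖v + r • f' x‖ ^ 2 + ‖(2 * q) • (x - xstar)‖ ^ 2) := norm_add_sq_le _ _
      _ = _ := by rw [norm_smul, Real.norm_eq_abs, mul_pow, sq_abs]
  rw [hvg] at hw
  rw [nagEnergy, nagDissipation]
  linarith [mul_le_mul_of_nonneg_left hw hm, mul_le_mul_of_nonneg_left hinner hm,
    mul_le_mul_of_nonneg_left hinner hm2, mul_nonneg hm (hvg ▸ sq_nonneg ‖v + r • f' x‖),
    mul_nonneg hm hgap, mul_nonneg hm2 hgap, mul_nonneg hm (sq_nonneg ‖v‖),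
    mul_nonneg hm2 (sq_nonneg ‖v‖), mul_nonneg (sq_nonneg r) (sq_nonneg ‖f' x‖),
    mul_nonneg hm2 (mul_nonneg (sq_nonneg q) (sq_nonneg ‖x - xstar‖))]

theorem nagEnergy_succ_le (hq : 0 ≤ q) (hr : 0 ≤ r)
    (hsc : ∀ z w, f w ≥ f z + ⟪f' z, w - z⟫ + q ^ 2 / 2 * ‖w - z‖ ^ 2)
    (hmin : ∀ z, f xstar ≤ f z) {x₀ x₁ v₀ v₁ : E} (hx : x₁ - x₀ = r • v₁)
    (hv : v₁ - v₀ = -((2 * (q * r)) • v₁) - r • (f' x₁ - f' x₀) - (r * (1 + q * r)) • f' x₁) :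
    (1 + q * r / 4) * nagEnergy f f' q r xstar x₁ v₁ ≤ nagEnergy f f' q r xstar x₀ v₀ := by
  have hdecrease := nagEnergy_sub_le (xstar := xstar) hsc hx hv
  have hdissipation := mul_nagEnergy_le_nagDissipation hq hr hsc hmin x₁ v₁
  linarith

theorem nagEnergy_initial_le [CompleteSpace E] {L : ℝ} (hL : 0 < L) (hq : 0 ≤ q) (hr : 0 ≤ r)
    (hgrad : ∀ z, HasGradientAt f (f' z) z) (hLip : ∀ z w, ‖f' z - f' w‖ ≤ L * ‖z - w‖)
    (hstar : f' xstar = 0) (x₀ : E) :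
    nagEnergy f f' q r xstar x₀ (-((2 * r / (1 + q * r)) • f' x₀)) ≤
      ((3 - 2 * (q * r) + q ^ 2 * r ^ 2) / (2 + 4 * (q * r) + 2 * (q ^ 2 * r ^ 2)) * (r ^ 2 * L)
        + 2 * q ^ 2 / L + (1 + q * r) / 2) * (L * ‖x₀ - xstar‖ ^ 2) := by
  set c := 2 * r / (1 + q * r)
  set K := (3 - 2 * (q * r) + q ^ 2 * r ^ 2) / (2 + 4 * (q * r) + 2 * (q ^ 2 * r ^ 2))
  have hm : 0 ≤ q * r := mul_nonneg hq hr
  have hgap := sub_le_of_lipschitz_gradient hgrad hLip hstar x₀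
  have hgrad_sq : ‖f' x₀‖ ^ 2 ≤ L ^ 2 * ‖x₀ - xstar‖ ^ 2 := by
    rw [← mul_pow]
    exact pow_le_pow_left₀ (norm_nonneg _) (by simpa [hstar] using hLip x₀ xstar) 2
  have hw : ‖-(c • f' x₀) + (2 * q) • (x₀ - xstar) + r • f' x₀‖ ^ 2
      ≤ 2 * ((2 * q) ^ 2 * ‖x₀ - xstar‖ ^ 2 + (r - c) ^ 2 * ‖f' x₀‖ ^ 2) := by
    calc _ = ‖(2 * q) • (x₀ - xstar) + (r - c) • f' x₀‖ ^ 2 := by congr 2; module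
      _ ≤ _ := norm_add_sq_le _ _
      _ = _ := by simp only [norm_smul, Real.norm_eq_abs, mul_pow, sq_abs]
  -- The constant `K` of the statement is exactly the coefficient of `‖∇f(x₀)‖²` produced by `hw`.
  have hK : c ^ 2 / 4 + (r - c) ^ 2 / 2 = K * r ^ 2 := by
    simp only [c, K]
    field_simp
    ring
  have hK_nonneg : 0 ≤ K := div_nonneg (by nlinarith [sq_nonneg (1 - q * r)]) (by positivity)
  have hconst : (K * (r ^ 2 * L) + 2 * q ^ 2 / L + (1 + q * r) / 2) * (L * ‖x₀ - xstar‖ ^ 2)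
      = K * r ^ 2 * (L ^ 2 * ‖x₀ - xstar‖ ^ 2) + 2 * q ^ 2 * ‖x₀ - xstar‖ ^ 2
        + (1 + q * r) / 2 * (L * ‖x₀ - xstar‖ ^ 2) := by
    field_simp
  rw [hconst, nagEnergy, norm_neg, norm_smul, Real.norm_eq_abs, mul_pow, sq_abs]
  linarith [congrArg (· * ‖f' x₀‖ ^ 2) hK,
    mul_le_mul_of_nonneg_left hgrad_sq (mul_nonneg hK_nonneg (sq_nonneg r)),
    mul_nonneg hm (mul_nonneg hL.le (sq_nonneg ‖x₀ - xstar‖))]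

end Scheme

theorem stmt10_general
    {n : ℕ} (μ L : ℝ) (hμ : 0 < μ) (hμL : μ ≤ L)
    (f : EuclideanSpace ℝ (Fin n) → ℝ)
    (f' : EuclideanSpace ℝ (Fin n) → EuclideanSpace ℝ (Fin n))
    (hgrad : ∀ z, HasGradientAt f (f' z) z)
    (hLip : ∀ z w, ‖f' z - f' w‖ ≤ L * ‖z - w‖)
    (hsc : ∀ z w, f w ≥ f z + ⟪f' z, w - z⟫ + μ / 2 * ‖w - z‖ ^ 2)
    (xstar : EuclideanSpace ℝ (Fin n)) (hmin : ∀ z, f xstar ≤ f z)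
    (s : ℝ) (hs0 : 0 < s)
    (x v : ℕ → EuclideanSpace ℝ (Fin n))
    (hv0 : v 0 = -((2 * Real.sqrt s / (1 + Real.sqrt (μ * s))) • f' (x 0)))
    (hx : ∀ k : ℕ, x (k + 1) - x k = Real.sqrt s • v (k + 1))
    (hv : ∀ k : ℕ, v (k + 1) - v k = -((2 * Real.sqrt (μ * s)) • v (k + 1))
      - Real.sqrt s • (f' (x (k + 1)) - f' (x k))
      - (Real.sqrt s * (1 + Real.sqrt (μ * s))) • f' (x (k + 1)))
    : ∀ k : ℕ, f (x k) - f xstar ≤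
      ((3 - 2 * Real.sqrt (μ * s) + μ * s) / (2 + 4 * Real.sqrt (μ * s) + 2 * (μ * s)) * (s * L)
        + 2 * μ / L + (1 + Real.sqrt (μ * s)) / 2) *
      (L * ‖x 0 - xstar‖ ^ 2) / (1 + Real.sqrt (μ * s) / 4) ^ k := by
  have hL : 0 < L := hμ.trans_le hμL
  obtain ⟨q, hq, rfl⟩ : ∃ q, 0 < q ∧ μ = q ^ 2 :=
    ⟨√μ, Real.sqrt_pos.2 hμ, (Real.sq_sqrt hμ.le).symm⟩
  obtain ⟨r, hr, rfl⟩ : ∃ r, 0 < r ∧ s = r ^ 2 :=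
    ⟨√s, Real.sqrt_pos.2 hs0, (Real.sq_sqrt hs0.le).symm⟩
  have hqr : √(q ^ 2 * r ^ 2) = q * r := by rw [← mul_pow, Real.sqrt_sq (by positivity)]
  simp only [hqr, Real.sqrt_sq hr.le] at hv0 hx hv ⊢
  have hstar : f' xstar = 0 :=
    IsLocalMin.hasGradientAt_eq_zero (Filter.Eventually.of_forall hmin) (hgrad xstar)
  set V := fun k ↦ nagEnergy f f' q r xstar (x k) (v k)
  have hdecay : ∀ k, V (k + 1) ≤ (1 + q * r / 4)⁻¹ * V k := fun k ↦ by
    rw [inv_mul_eq_div, le_div_iff₀ (by positivity), mul_comm]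
    exact nagEnergy_succ_le hq.le hr.le hsc hmin (hx k) (hv k)
  intro k
  calc f (x k) - f xstar ≤ V k := sub_le_nagEnergy (x k) (v k)
    _ ≤ (1 + q * r / 4)⁻¹ ^ k * V 0 := le_geom (by positivity) k fun k _ ↦ hdecay k
    _ ≤ _ := by
      rw [inv_pow, inv_mul_eq_div]
      gcongr
      simpa only [V, hv0] using nagEnergy_initial_le hL hq.le hr.le hgrad hLip hstar (x 0)

theorem stmt10
    {n : ℕ} (μ L : ℝ) (hμ : 0 < μ) (hμL : μ ≤ L)
    (f : EuclideanSpace ℝ (Fin n) → ℝ)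
    (f' : EuclideanSpace ℝ (Fin n) → EuclideanSpace ℝ (Fin n))
    (hgrad : ∀ z, HasGradientAt f (f' z) z)
    (hLip : ∀ z w, ‖f' z - f' w‖ ≤ L * ‖z - w‖)
    (hsc : ∀ z w, f w ≥ f z + ⟪f' z, w - z⟫ + μ / 2 * ‖w - z‖ ^ 2)
    (xstar : EuclideanSpace ℝ (Fin n)) (hmin : ∀ z, f xstar ≤ f z)
    (s : ℝ) (hs0 : 0 < s) (hs : s ≤ 1 / L)
    (x v : ℕ → EuclideanSpace ℝ (Fin n))
    (hv0 : v 0 = -((2 * Real.sqrt s / (1 + Real.sqrt (μ * s))) • f' (x 0)))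
    (hx : ∀ k : ℕ, x (k + 1) - x k = Real.sqrt s • v (k + 1))
    (hv : ∀ k : ℕ, v (k + 1) - v k = -((2 * Real.sqrt (μ * s)) • v (k + 1))
      - Real.sqrt s • (f' (x (k + 1)) - f' (x k))
      - (Real.sqrt s * (1 + Real.sqrt (μ * s))) • f' (x (k + 1)))
    : ∀ k : ℕ, f (x k) - f xstar ≤
      ((3 - 2 * Real.sqrt (μ * s) + μ * s) / (2 + 4 * Real.sqrt (μ * s) + 2 * (μ * s)) * (s * L)
        + 2 * μ / L + (1 + Real.sqrt (μ * s)) / 2) *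
      (L * ‖x 0 - xstar‖ ^ 2) / (1 + Real.sqrt (μ * s) / 4) ^ k :=
  stmt10_general μ L hμ hμL f f' hgrad hLip hsc xstar hmin s hs0 x v hv0 hx hv
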